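/- The signless Laplacian spectral radius of the graph $K_2 \vee 10K_1$ equals $7 + 3\sqrt{5}$, and $K_2 \vee 10K_1$ contains no spanning tree with leaf degree at most $4$. -/

import Mathlib

/-- The signless Laplacian matrix `Q(G) = D(G) + A(G)` of a simple graph, over `ℝ`. -/
noncomputable def signlessLap {V : Type*} [Fintype V] [DecidableEq V] (G : SimpleGraph V) :
    Matrix V V ℝ :=
  letI : DecidableRel G.Adj := Classical.decRel _
  G.degMatrix ℝ + G.adjMatrix ℝ

/-- The signless Laplacian spectral radius `q(G)`: the largest eigenvalue of `Q(G)`. -/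
noncomputable def qRadius {V : Type*} [Fintype V] [DecidableEq V] (G : SimpleGraph V) : ℝ :=
  sSup (spectrum ℝ (signlessLap G))

/-- `G` has a spanning tree whose leaf degree is at most `k`, i.e. a spanning tree `T`
in which every vertex is adjacent (in `T`) to at most `k` leaves of `T`. -/
def HasSpanningTreeWithLeafDegLE {V : Type*} (G : SimpleGraph V) (k : ℕ) : Prop :=
  ∃ T : SimpleGraph V, T ≤ G ∧ T.IsTree ∧
    ∀ v : V, {u : V | T.Adj v u ∧ (T.neighborSet u).ncard = 1}.ncard ≤ k

/-- The join `G ∨ H` of two vertex-disjoint graphs: all edges between the two parts. -/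
def SimpleGraph.graphJoin {α β : Type*} (G : SimpleGraph α) (H : SimpleGraph β) :
    SimpleGraph (α ⊕ β) where
  Adj x y :=
    match x, y with
    | Sum.inl a, Sum.inl b => G.Adj a b
    | Sum.inr a, Sum.inr b => H.Adj a b
    | Sum.inl _, Sum.inr _ => True
    | Sum.inr _, Sum.inl _ => True
  symm := by constructor; rintro (a | a) (b | b) h <;> first | trivial | exact G.symm.symm _ _ h | exact H.symm.symm _ _ h
  loopless := by constructor; rintro (a | a) h <;> first | exact G.loopless.irrefl _ h | exact H.loopless.irrefl _ h

/-- The disjoint union `G ∪ H` of two vertex-disjoint graphs. -/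
def SimpleGraph.graphDisjUnion {α β : Type*} (G : SimpleGraph α) (H : SimpleGraph β) :
    SimpleGraph (α ⊕ β) where
  Adj x y :=
    match x, y with
    | Sum.inl a, Sum.inl b => G.Adj a b
    | Sum.inr a, Sum.inr b => H.Adj a b
    | _, _ => False
  symm := by constructor; rintro (a | a) (b | b) h <;> first | trivial | exact G.symm.symm _ _ h | exact H.symm.symm _ _ h
  loopless := by constructor; rintro (a | a) h <;> first | exact G.loopless.irrefl _ h | exact H.loopless.irrefl _ h


/-!
Summing the eigenvalue equations of `Q(K_m ∨ tK₁)` over the two sides of the join yields the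
quotient matrix `[[2m+t-2, t], [m, m]]`; an eigenvector on which both sums vanish is an eigenvector
for `m + t - 2` or `m`. Hence `q` is the larger root of `μ² - (3m+t-2)μ + 2m(m-1)`, which is
`7 + 3√5` for `m = 2`, `t = 10`.

In a spanning tree of `K₂ ∨ tK₁` every vertex of the independent side is adjacent only to the two
hubs, and at most one of them to both (a tree has no 4-cycle), so the other `t - 1` are leaves and
one hub carries at least `(t - 1) / 2` of them.
-/

open Matrix

theorem Matrix.mem_spectrum_iff_exists_mulVec_eq_smul {K n : Type*} [Field K] [Fintype n]
    [DecidableEq n] (A : Matrix n n K) (μ : K) :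
    μ ∈ spectrum K A ↔ ∃ v ≠ 0, A *ᵥ v = μ • v := by
  rw [← spectrum_toLin', ← Module.End.hasEigenvalue_iff_mem_spectrum,
    Module.End.hasEigenvalue_iff, Submodule.ne_bot_iff]
  simp only [Module.End.mem_eigenspace_iff, toLin'_apply]
  exact ⟨fun ⟨v, hv, h⟩ => ⟨v, h, hv⟩, fun ⟨v, h, hv⟩ => ⟨v, hv, h⟩⟩

namespace SimpleGraph

section

variable {V : Type*} [Fintype V] [DecidableEq V]

theorem signlessLap_mulVec_apply (G : SimpleGraph V) [DecidableRel G.Adj] (v : V → ℝ) (x : V) :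
    (signlessLap G *ᵥ v) x = ∑ y, if G.Adj x y then v x + v y else 0 := by
  have : signlessLap G = G.degMatrix ℝ + G.adjMatrix ℝ := by unfold signlessLap; congr!
  rw [this, add_mulVec, Pi.add_apply, degMatrix_mulVec_apply, adjMatrix_mulVec_apply,
    ← Finset.sum_filter, ← neighborFinset_eq_filter, Finset.sum_add_distrib, Finset.sum_const,
    card_neighborFinset_eq_degree, nsmul_eq_mul]

end

@[simp]
theorem graphJoin_adj_inl_inl {α β : Type*} {G : SimpleGraph α} {H : SimpleGraph β} {a b : α} :
    (G.graphJoin H).Adj (.inl a) (.inl b) ↔ G.Adj a b := Iff.rfl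

@[simp]
theorem graphJoin_adj_inr_inr {α β : Type*} {G : SimpleGraph α} {H : SimpleGraph β} {a b : β} :
    (G.graphJoin H).Adj (.inr a) (.inr b) ↔ H.Adj a b := Iff.rfl

@[simp]
theorem graphJoin_adj_inl_inr {α β : Type*} {G : SimpleGraph α} {H : SimpleGraph β} {a : α}
    {b : β} : (G.graphJoin H).Adj (.inl a) (.inr b) := trivial

@[simp]
theorem graphJoin_adj_inr_inl {α β : Type*} {G : SimpleGraph α} {H : SimpleGraph β} {a : α}
    {b : β} : (G.graphJoin H).Adj (.inr b) (.inl a) := trivial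

section

variable {α β : Type*} [Fintype α] [DecidableEq α] [Fintype β] [DecidableEq β]

theorem signlessLap_top_graphJoin_bot_mulVec_inl (v : α ⊕ β → ℝ) (a : α) :
    (signlessLap ((⊤ : SimpleGraph α).graphJoin (⊥ : SimpleGraph β)) *ᵥ v) (.inl a) =
      (Fintype.card α + Fintype.card β - 2) * v (.inl a) + ∑ b, v (.inl b)
        + ∑ j, v (.inr j) := by
  classical
  rw [signlessLap_mulVec_apply, Fintype.sum_sum_type]
  simp only [graphJoin_adj_inl_inl, top_adj, graphJoin_adj_inl_inr, if_true, ite_not]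
  rw [Finset.sum_ite, Finset.sum_const_zero, zero_add, Finset.filter_ne,
    Finset.sum_erase_eq_sub (Finset.mem_univ a)]
  simp only [Finset.sum_add_distrib, Finset.sum_const, Finset.card_univ, nsmul_eq_mul]
  ring

theorem signlessLap_top_graphJoin_bot_mulVec_inr (v : α ⊕ β → ℝ) (i : β) :
    (signlessLap ((⊤ : SimpleGraph α).graphJoin (⊥ : SimpleGraph β)) *ᵥ v) (.inr i) =
      Fintype.card α * v (.inr i) + ∑ b, v (.inl b) := by
  classical
  rw [signlessLap_mulVec_apply, Fintype.sum_sum_type]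
  simp only [graphJoin_adj_inr_inl, graphJoin_adj_inr_inr, bot_adj, if_true, if_false,
    Finset.sum_const_zero, add_zero, Finset.sum_add_distrib, Finset.sum_const,
    Finset.card_univ, nsmul_eq_mul]

theorem signlessLap_top_graphJoin_bot_quotient {v : α ⊕ β → ℝ} {μ : ℝ}
    (hvμ : signlessLap ((⊤ : SimpleGraph α).graphJoin (⊥ : SimpleGraph β)) *ᵥ v = μ • v) :
    (2 * Fintype.card α + Fintype.card β - 2) * ∑ a, v (.inl a)
        + Fintype.card α * ∑ j, v (.inr j) = μ * ∑ a, v (.inl a) ∧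
      Fintype.card α * ∑ j, v (.inr j) + Fintype.card β * ∑ a, v (.inl a)
        = μ * ∑ j, v (.inr j) := by
  have hl := Finset.sum_congr rfl fun a (_ : a ∈ Finset.univ) => congrFun hvμ (.inl a)
  have hr := Finset.sum_congr rfl fun i (_ : i ∈ Finset.univ) => congrFun hvμ (.inr i)
  simp only [signlessLap_top_graphJoin_bot_mulVec_inl, signlessLap_top_graphJoin_bot_mulVec_inr,
    Pi.smul_apply, smul_eq_mul, Finset.sum_add_distrib, ← Finset.mul_sum, Finset.sum_const,
    Finset.card_univ, nsmul_eq_mul] at hl hr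
  constructor
  · linear_combination hl
  · linear_combination hr

theorem eq_or_eq_or_of_mem_spectrum_signlessLap_top_graphJoin_bot {μ : ℝ}
    (hμ : μ ∈ spectrum ℝ (signlessLap ((⊤ : SimpleGraph α).graphJoin (⊥ : SimpleGraph β)))) :
    μ = Fintype.card α + Fintype.card β - 2 ∨ μ = Fintype.card α ∨
      μ ^ 2 - (3 * Fintype.card α + Fintype.card β - 2) * μ
        + 2 * Fintype.card α * (Fintype.card α - 1) = 0 := by
  obtain ⟨v, hv, hvμ⟩ := (mem_spectrum_iff_exists_mulVec_eq_smul _ _).mp hμ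
  obtain ⟨hX, hW⟩ := signlessLap_top_graphJoin_bot_quotient hvμ
  have hl := fun a => signlessLap_top_graphJoin_bot_mulVec_inl v a ▸ congrFun hvμ (.inl a)
  have hr := fun i => signlessLap_top_graphJoin_bot_mulVec_inr v i ▸ congrFun hvμ (.inr i)
  set m : ℝ := (Fintype.card α : ℝ)
  set t : ℝ := (Fintype.card β : ℝ)
  set X := ∑ a, v (.inl a)
  set W := ∑ j, v (.inr j)
  by_contra! ⟨hμ₁, hμ₂, hp⟩
  have hX0 : X = 0 := by
    refine (mul_eq_zero.mp ?_).resolve_left hp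
    linear_combination (m - μ) * hX - m * hW
  have hW0 : W = 0 := by
    refine (mul_eq_zero.mp ?_).resolve_left hp
    linear_combination (-t) * hX + (2 * m + t - 2 - μ) * hW
  refine hv (funext fun x => ?_)
  rcases x with a | i
  · have hx := hl a
    rw [hX0, hW0, add_zero, add_zero, Pi.smul_apply, smul_eq_mul] at hx
    exact (mul_eq_mul_right_iff.mp hx).resolve_left hμ₁.symm
  · have hx := hr i
    rw [hX0, add_zero, Pi.smul_apply, smul_eq_mul] at hx
    exact (mul_eq_mul_right_iff.mp hx).resolve_left hμ₂.symm

theorem mem_spectrum_signlessLap_top_graphJoin_bot [Nonempty α] [Nonempty β] {μ : ℝ}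
    (hμ : μ ^ 2 - (3 * Fintype.card α + Fintype.card β - 2) * μ
        + 2 * Fintype.card α * (Fintype.card α - 1) = 0) :
    μ ∈ spectrum ℝ (signlessLap ((⊤ : SimpleGraph α).graphJoin (⊥ : SimpleGraph β))) := by
  set m : ℝ := (Fintype.card α : ℝ)
  have hm : m ≠ 0 := by positivity
  refine (mem_spectrum_iff_exists_mulVec_eq_smul _ _).mpr
    ⟨Sum.elim (fun _ => μ - m) (fun _ => m),
      fun h => hm (congrFun h (.inr (Classical.arbitrary β))), ?_⟩
  funext x
  rcases x with a | i
  · simp only [signlessLap_top_graphJoin_bot_mulVec_inl, Sum.elim_inl, Sum.elim_inr,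
      Finset.sum_const, Finset.card_univ, nsmul_eq_mul, Pi.smul_apply, smul_eq_mul]
    linear_combination -hμ
  · simp only [signlessLap_top_graphJoin_bot_mulVec_inr, Sum.elim_inl, Sum.elim_inr,
      Finset.sum_const, Finset.card_univ, nsmul_eq_mul, Pi.smul_apply, smul_eq_mul]
    ring

end

variable {V : Type*}

def leafNeighborSet (T : SimpleGraph V) (v : V) : Set V :=
  {u | T.Adj v u ∧ (T.neighborSet u).ncard = 1}

theorem IsAcyclic.commonNeighbors_subsingleton {G : SimpleGraph V} (hG : G.IsAcyclic) {u w : V}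
    (huw : u ≠ w) : (G.commonNeighbors u w).Subsingleton := by
  intro x hx y hy
  rw [mem_commonNeighbors] at hx hy
  have hpath : ∀ z (hu : G.Adj u z) (hw : G.Adj z w), (Walk.cons hu (Walk.cons hw .nil)).IsPath :=
    fun z hu hw => by simp [Walk.isPath_def, huw, hu.ne, hw.ne]
  have := (hG.subsingleton_path u w).elim ⟨_, hpath x hx.1 hx.2.symm⟩ ⟨_, hpath y hy.1 hy.2.symm⟩
  simpa using congrArg (fun p : G.Path u w => p.1.support) this

/-- A vertex of `S` is a leaf at `u` or at `w` unless it is a common neighbour of both, and a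
tree has at most one of those. -/
theorem IsTree.ncard_le_of_neighborSet_subset_pair [Finite V] {T : SimpleGraph V} (hT : T.IsTree)
    {u w : V} (huw : u ≠ w) {S : Set V} (hS : ∀ x ∈ S, T.neighborSet x ⊆ {u, w}) :
    S.ncard ≤ (T.leafNeighborSet u).ncard + (T.leafNeighborSet w).ncard + 1 := by
  have hsub : S ⊆ T.leafNeighborSet u ∪ T.leafNeighborSet w ∪ T.commonNeighbors u w := by
    intro x hx
    have leaf : ∀ y z, T.Adj x y → ¬ T.Adj x z → T.neighborSet x ⊆ {y, z} →
        x ∈ T.leafNeighborSet y := fun y z hy hz hxyz =>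
      ⟨hy.symm, Set.ncard_eq_one.mpr ⟨y, Set.Subset.antisymm
        (fun y' hy' => (hxyz hy').resolve_right (by rintro rfl; exact hz hy'))
        (Set.singleton_subset_iff.mpr hy)⟩⟩
    have hpair := hS x hx
    by_cases hu : T.Adj x u <;> by_cases hw : T.Adj x w
    · exact Or.inr ⟨hu.symm, hw.symm⟩
    · exact Or.inl (Or.inl (leaf u w hu hw hpair))
    · exact Or.inl (Or.inr (leaf w u hw hu (Set.pair_comm u w ▸ hpair)))
    · have : Nontrivial V := ⟨⟨u, w, huw⟩⟩
      exact absurd (fun y hy => by rcases hpair hy with rfl | rfl <;> contradiction)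
        (hT.connected.preconnected.not_isIsolated x)
  calc S.ncard ≤ (T.leafNeighborSet u ∪ T.leafNeighborSet w ∪ T.commonNeighbors u w).ncard :=
        Set.ncard_le_ncard hsub
    _ ≤ (T.leafNeighborSet u).ncard + (T.leafNeighborSet w).ncard
          + (T.commonNeighbors u w).ncard :=
        (Set.ncard_union_le _ _).trans (add_le_add_left (Set.ncard_union_le _ _) _)
    _ ≤ _ := add_le_add_right (Set.ncard_le_one_iff_subsingleton.mpr
        (hT.isAcyclic.commonNeighbors_subsingleton huw)) _

theorem card_le_of_hasSpanningTreeWithLeafDegLE_graphJoin_bot {β : Type*} [Finite β]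
    {G : SimpleGraph (Fin 2)} {k : ℕ}
    (h : HasSpanningTreeWithLeafDegLE (G.graphJoin (⊥ : SimpleGraph β)) k) :
    Nat.card β ≤ 2 * k + 1 := by
  obtain ⟨T, hTG, hT, hleaf⟩ := h
  have hS : ∀ x ∈ Set.range Sum.inr, T.neighborSet x ⊆ {.inl 0, .inl 1} := by
    rintro _ ⟨i, rfl⟩ (y | y) hy
    · fin_cases y <;> simp
    · exact absurd (hTG hy) id
  have := hT.ncard_le_of_neighborSet_subset_pair (by simp) hS
  rw [Set.ncard_range_of_injective Sum.inr_injective] at this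
  unfold leafNeighborSet at this
  linarith [hleaf (.inl 0), hleaf (.inl 1)]

end SimpleGraph

theorem isGreatest_spectrum_signlessLap_K2_join_10K1 :
    IsGreatest (spectrum ℝ (signlessLap ((⊤ : SimpleGraph (Fin 2)).graphJoin
      (⊥ : SimpleGraph (Fin 10))))) (7 + 3 * Real.sqrt 5) := by
  have h5 : Real.sqrt 5 ^ 2 = 5 := Real.sq_sqrt (by norm_num)
  have h2 : 2 ≤ Real.sqrt 5 := Real.le_sqrt_of_sq_le (by norm_num)
  refine ⟨SimpleGraph.mem_spectrum_signlessLap_top_graphJoin_bot ?_, fun μ hμ => ?_⟩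
  · norm_num
    linear_combination 9 * h5
  · rcases SimpleGraph.eq_or_eq_or_of_mem_spectrum_signlessLap_top_graphJoin_bot hμ
      with h | h | h <;> norm_num at h
    · linarith
    · linarith
    · have : (μ - (7 + 3 * Real.sqrt 5)) * (μ - (7 - 3 * Real.sqrt 5)) = 0 := by
        linear_combination h - 9 * h5
      rcases mul_eq_zero.mp this with h' | h' <;> linarith

/-- `q(K₂ ∨ 10K₁) = 7 + 3 * Real.sqrt 5` and `K₂ ∨ 10K₁` has no spanning tree with leaf degree at
most 4. -/
theorem qRadius_K2_join_10K1 :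
    qRadius ((⊤ : SimpleGraph (Fin 2)).graphJoin (⊥ : SimpleGraph (Fin 10))) = 7 + 3 * Real.sqrt 5 ∧
      ¬ HasSpanningTreeWithLeafDegLE ((⊤ : SimpleGraph (Fin 2)).graphJoin (⊥ : SimpleGraph (Fin 10))) 4 := by
  refine ⟨isGreatest_spectrum_signlessLap_K2_join_10K1.csSup_eq, fun h => ?_⟩
  have := SimpleGraph.card_le_of_hasSpanningTreeWithLeafDegLE_graphJoin_bot h
  norm_num at this
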